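/- arXiv:1803.05852 — 7 statements merged into one kernel-verified Lean document; each statement's English description precedes it below -/
import Mathlib

section
/- Let L be an n×n real symmetric matrix, let b, J, V, V' be vectors in ℝⁿ, and let w be a real number. If L·V = J and (L − w·b·bᵀ)·V' = J, then ⟨V', J⟩ − ⟨V, J⟩ = w·(bᵀV)·(bᵀV'). (In circuit terms: the change in total I²R dissipation caused by removing a resistor link equals the product of the current flowing on the link before its removal, w·bᵀV, and the potential difference across its endpoints after its removal, bᵀV'.) -/
open Matrix

namespace Matrix

variable {ι R : Type*} [Fintype ι] [CommSemiring R]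

theorem IsSymm.dotProduct_mulVec_comm {A : Matrix ι ι R} (hA : A.IsSymm) (x y : ι → R) :
    x ⬝ᵥ A *ᵥ y = y ⬝ᵥ A *ᵥ x := by
  simpa only [hA.eq] using dotProduct_transpose_mulVec A x y

theorem dotProduct_vecMulVec_mulVec (x u v y : ι → R) :
    x ⬝ᵥ vecMulVec u v *ᵥ y = (x ⬝ᵥ u) * (v ⬝ᵥ y) := by
  rw [vecMulVec_mulVec, op_smul_eq_smul, dotProduct_smul, smul_eq_mul, mul_comm]

end Matrix

/-- The change in total I²R dissipation caused by removing a resistor link equals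
the product of the current on the link before removal, `w * (b ⬝ᵥ V)`, and the potential
difference across its endpoints after removal, `b ⬝ᵥ V'`. -/
theorem dissipation_change_eq_current_mul_potential
    {n : ℕ} (L : Matrix (Fin n) (Fin n) ℝ) (hL : L.IsSymm)
    (b J V V' : Fin n → ℝ) (w : ℝ)
    (hV : L.mulVec V = J)
    (hV' : (L - w • vecMulVec b b).mulVec V' = J) :
    V' ⬝ᵥ J - V ⬝ᵥ J = w * (b ⬝ᵥ V) * (b ⬝ᵥ V') := by
  calc V' ⬝ᵥ J - V ⬝ᵥ J = V' ⬝ᵥ L *ᵥ V - V ⬝ᵥ (L - w • vecMulVec b b) *ᵥ V' := by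
        rw [hV, hV']
    _ = V ⬝ᵥ (w • vecMulVec b b) *ᵥ V' := by
        rw [hL.dotProduct_mulVec_comm V' V, sub_mulVec, dotProduct_sub, sub_sub_cancel]
    _ = w * (b ⬝ᵥ V) * (b ⬝ᵥ V') := by
        rw [smul_mulVec, dotProduct_smul, dotProduct_vecMulVec_mulVec, dotProduct_comm V b,
          smul_eq_mul, mul_assoc]
end

section
/- Let L and M be n×n real symmetric positive semidefinite matrices such that L − M is positive semidefinite, and let I, V, V' ∈ ℝⁿ satisfy L·V = I and M·V' = I. Then ⟨V', I⟩ ≥ ⟨V, I⟩. (Decreasing the conductance matrix in the Loewner order can only increase the total power dissipation for a fixed current injection.) -/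
open Matrix

/-- Decreasing the conductance matrix in the Loewner order can only increase the total
power dissipation for a fixed current injection. -/
theorem dissipation_mono_of_loewner_le
    {n : ℕ} (L M : Matrix (Fin n) (Fin n) ℝ)
    (hL : L.PosSemidef) (hM : M.PosSemidef) (hLM : (L - M).PosSemidef)
    (I V V' : Fin n → ℝ)
    (hV : L.mulVec V = I) (hV' : M.mulVec V' = I) :
    V' ⬝ᵥ I ≥ V ⬝ᵥ I := by
  have hMsym : ∀ x y : Fin n → ℝ, x ⬝ᵥ M.mulVec y = y ⬝ᵥ M.mulVec x := by
    intro x y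
    rw [Matrix.dotProduct_mulVec, ← Matrix.mulVec_transpose]
    have : Mᵀ = M := by
      have := hM.1
      simpa [Matrix.conjTranspose, Matrix.IsSymm] using this
    rw [this, dotProduct_comm]
  have h1 : 0 ≤ (V - V') ⬝ᵥ M.mulVec (V - V') := by
    have := hM.dotProduct_mulVec_nonneg (V - V')
    simpa using this
  have h2 : 0 ≤ V ⬝ᵥ (L - M).mulVec V := by
    have := hLM.dotProduct_mulVec_nonneg V
    simpa using this
  have e1 : (V - V') ⬝ᵥ M.mulVec (V - V')
      = V ⬝ᵥ M.mulVec V - V ⬝ᵥ I - V ⬝ᵥ I + V' ⬝ᵥ I := by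
    have hVMV' : V ⬝ᵥ M.mulVec V' = V ⬝ᵥ I := by rw [hV']
    have hV'MV : V' ⬝ᵥ M.mulVec V = V ⬝ᵥ I := by rw [hMsym, hV']
    have hV'MV' : V' ⬝ᵥ M.mulVec V' = V' ⬝ᵥ I := by rw [hV']
    simp [Matrix.mulVec_sub, sub_dotProduct, dotProduct_sub,
      hVMV', hV'MV, hV'MV']
    ring
  have e2 : V ⬝ᵥ (L - M).mulVec V = V ⬝ᵥ I - V ⬝ᵥ M.mulVec V := by
    rw [Matrix.sub_mulVec, dotProduct_sub, hV]
  rw [e1] at h1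
  rw [e2] at h2
  linarith
end

section
/- Consider a finite network with n nodes and k edges, where edge e has distinct endpoints m_e, n_e, signed incidence vector b_e = χ_{m_e} − χ_{n_e} ∈ ℝⁿ, and conductance w_e ≥ 0, and let L = Σ_e w_e·b_e·b_eᵀ be its weighted graph Laplacian. Fix an edge e₀ and let L' = L − w_{e₀}·b_{e₀}·b_{e₀}ᵀ be the Laplacian of the network with edge e₀ removed. If I, V, V' ∈ ℝⁿ satisfy L·V = I and L'·V' = I, then ⟨V', I⟩ ≥ ⟨V, I⟩. (The total I²R losses of a current-controlled circuit comprised purely of current sources and resistors cannot decrease after removing a resistance link.) -/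
/-!
Removing an edge leaves a positive semidefinite Laplacian `L' ≤ L`, and for `L V = I = L' V'`
the symmetry of `L'` gives the identity
`V' ⬝ I - V ⬝ I = (V - V') ⬝ L' (V - V') + V ⬝ (L - L') V`,
whose right-hand side is a sum of two nonnegative quadratic forms.
-/

open Matrix

theorem posSemidef_smul_vecMulVec_self {ι R : Type*} [Finite ι] [CommRing R] [PartialOrder R]
    [StarRing R] [StarOrderedRing R] [TrivialStar R] {c : R} (hc : 0 ≤ c) (v : ι → R) :
    (c • vecMulVec v v).PosSemidef := by
  simpa only [star_trivial] using (posSemidef_vecMulVec_self_star v).smul hc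

theorem dotProduct_le_of_posSemidef_sub {ι R : Type*} [Fintype ι] [CommRing R] [PartialOrder R]
    [IsOrderedRing R] [StarRing R] [TrivialStar R] {L L' : Matrix ι ι R}
    (hL' : L'.PosSemidef) (hLL' : (L - L').PosSemidef) {I V V' : ι → R}
    (hV : L *ᵥ V = I) (hV' : L' *ᵥ V' = I) :
    V ⬝ᵥ I ≤ V' ⬝ᵥ I := by
  have hsymm : V' ⬝ᵥ L' *ᵥ V = V ⬝ᵥ I := by
    rw [← (isHermitian_iff_isSymm.mp hL'.isHermitian).eq, dotProduct_transpose_mulVec, hV']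
  have hgap : 0 ≤ (V - V') ⬝ᵥ L' *ᵥ (V - V') := by
    simpa only [star_trivial] using hL'.dotProduct_mulVec_nonneg (V - V')
  have hloss : 0 ≤ V ⬝ᵥ (L - L') *ᵥ V := by
    simpa only [star_trivial] using hLL'.dotProduct_mulVec_nonneg V
  rw [mulVec_sub, dotProduct_sub, sub_dotProduct, sub_dotProduct, hsymm, hV'] at hgap
  rw [sub_mulVec, dotProduct_sub, hV] at hloss
  linear_combination hgap + hloss

theorem dissipation_increase_of_edge_removal_general
    {n k : ℕ}
    (w : Fin k → ℝ) (hw : ∀ e, 0 ≤ w e)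
    (b : Fin k → Fin n → ℝ)
    (L L' : Matrix (Fin n) (Fin n) ℝ)
    (hLdef : L = ∑ e : Fin k, w e • vecMulVec (b e) (b e))
    (e₀ : Fin k)
    (hL'def : L' = L - w e₀ • vecMulVec (b e₀) (b e₀))
    (I V V' : Fin n → ℝ)
    (hV : L.mulVec V = I) (hV' : L'.mulVec V' = I) :
    V' ⬝ᵥ I ≥ V ⬝ᵥ I := by
  have hL' : L'.PosSemidef := by
    rw [hL'def, hLdef, ← Finset.sum_erase_eq_sub (Finset.mem_univ e₀)]
    exact posSemidef_sum _ fun e _ => posSemidef_smul_vecMulVec_self (hw e) (b e)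
  have hLL' : (L - L').PosSemidef := by
    rw [hL'def, sub_sub_cancel]
    exact posSemidef_smul_vecMulVec_self (hw e₀) (b e₀)
  exact dotProduct_le_of_posSemidef_sub hL' hLL' hV hV'

/-- The total I²R losses of a current-controlled circuit (comprised purely of current
sources and resistors) cannot decrease after removing a resistance link. -/
theorem dissipation_increase_of_edge_removal
    {n k : ℕ} (mE nE : Fin k → Fin n) (hne : ∀ e, mE e ≠ nE e)
    (w : Fin k → ℝ) (hw : ∀ e, 0 ≤ w e)
    (b : Fin k → Fin n → ℝ)
    (hb : ∀ e, b e = fun j => Pi.single (mE e) (1 : ℝ) j - Pi.single (nE e) (1 : ℝ) j)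
    (L L' : Matrix (Fin n) (Fin n) ℝ)
    (hLdef : L = ∑ e : Fin k, w e • vecMulVec (b e) (b e))
    (e₀ : Fin k)
    (hL'def : L' = L - w e₀ • vecMulVec (b e₀) (b e₀))
    (I V V' : Fin n → ℝ)
    (hV : L.mulVec V = I) (hV' : L'.mulVec V' = I) :
    V' ⬝ᵥ I ≥ V ⬝ᵥ I :=
  dissipation_increase_of_edge_removal_general w hw b L L' hLdef e₀ hL'def I V V' hV hV'
end

section
/- Let L be an n×n real symmetric positive semidefinite matrix, b ∈ ℝⁿ, and w > 0 such that L' = L − w·b·bᵀ is also positive semidefinite. Suppose I, V, V' ∈ ℝⁿ satisfy L·V = I and L'·V' = I, and that bᵀV ≠ 0 and bᵀV' ≠ 0. Then ⟨V', I⟩ > ⟨V, I⟩: the total power dissipation strictly increases after removing the link. -/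
open Matrix

/-- If the removed link carries nonzero current before removal and supports a nonzero
potential difference after removal, the total power dissipation strictly increases. -/
theorem dissipation_strict_increase
    {n : ℕ} (L : Matrix (Fin n) (Fin n) ℝ) (hL : L.PosSemidef)
    (b : Fin n → ℝ) (w : ℝ) (hw : 0 < w)
    (L' : Matrix (Fin n) (Fin n) ℝ)
    (hL'def : L' = L - w • vecMulVec b b) (hL' : L'.PosSemidef)
    (I V V' : Fin n → ℝ)
    (hV : L.mulVec V = I) (hV' : L'.mulVec V' = I)
    (hbV : b ⬝ᵥ V ≠ 0) (hbV' : b ⬝ᵥ V' ≠ 0) :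
    V' ⬝ᵥ I > V ⬝ᵥ I := by
  have hsym : Lᵀ = L := by
    have h := hL.isHermitian
    simpa [Matrix.IsHermitian, Matrix.conjTranspose_eq_transpose_of_trivial] using h
  set α := b ⬝ᵥ V with hα
  set β := b ⬝ᵥ V' with hβ
  have hvmv : ∀ x : Fin n → ℝ, (vecMulVec b b).mulVec x = (b ⬝ᵥ x) • b := by
    intro x
    ext i
    simp only [vecMulVec_apply, mulVec, dotProduct, Pi.smul_apply, smul_eq_mul,
      smul_eq_mul]
    rw [Finset.sum_mul]
    exact Finset.sum_congr rfl fun _ _ => by ring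
  -- L'.mulVec (V' - V) = (w * α) • b
  have key : L'.mulVec (V' - V) = (w * α) • b := by
    have h1 : L'.mulVec V = I - (w * α) • b := by
      rw [hL'def]
      simp [Matrix.sub_mulVec, hV, Matrix.smul_mulVec, hvmv, smul_smul]
      rfl
    rw [Matrix.mulVec_sub, hV', h1]
    abel
  have hpsd := hL'.dotProduct_mulVec_nonneg (V' - V)
  rw [key] at hpsd
  have hdot : (star (V' - V)) ⬝ᵥ ((w * α) • b) = (w * α) * (β - α) := by
    simp [dotProduct_smul, sub_dotProduct, hα, hβ, dotProduct_comm]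
    ring
  rw [hdot] at hpsd
  -- difference equals w * α * β
  have hdiff : V' ⬝ᵥ I - V ⬝ᵥ I = w * α * β := by
    have h1 : V' ⬝ᵥ I = V' ⬝ᵥ L.mulVec V := by rw [hV]
    have h2 : V ⬝ᵥ I = V ⬝ᵥ L.mulVec V' - w * β * α := by
      rw [← hV', hL'def]
      simp [Matrix.sub_mulVec, Matrix.smul_mulVec, hvmv, smul_smul,
        dotProduct_sub, dotProduct_smul, hα]
      rw [dotProduct_comm V b]
    have hsy : V' ⬝ᵥ L.mulVec V = V ⬝ᵥ L.mulVec V' := by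
      rw [dotProduct_mulVec V, ← Matrix.mulVec_transpose, hsym, dotProduct_comm]
    rw [h1, h2, hsy]; ring
  -- conclude
  have hα2 : 0 < w * (α * α) := mul_pos hw (mul_self_pos.mpr hbV)
  nlinarith [hpsd, hdiff, hα2]
end

section
/- Let N be a finite set of nodes and g : N × N → ℝ a symmetric function with g(m,n) ≥ 0 representing edge conductances. Let V : N → ℝ be a potential function and define the induced (Ohmic) flow f*(m,n) = g(m,n)·(V(m) − V(n)). Let f : N × N → ℝ be any antisymmetric flow (f(m,n) = −f(n,m)) supported on the edges (f(m,n) = 0 whenever g(m,n) = 0) that has the same divergence as f*, i.e. Σ_n f(m,n) = Σ_n f*(m,n) for every node m. Then Σ_{(m,n) : g(m,n) > 0} f(m,n)²/g(m,n) ≥ Σ_{(m,n) : g(m,n) > 0} f*(m,n)²/g(m,n). (Thomson's principle: among all flows with the given net injections, the Ohmic flow minimizes the total I²R dissipation.) -/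
/-!
Write `f = f* + d`. On a conducting edge, `f²/g = f*²/g + 2 d (V m - V n) + d²/g`. The cross
term sums to zero: `d` is antisymmetric, divergence-free and vanishes off the conducting
edges, and summing `d(m,n) (V m - V n)` by parts gives `2 Σ_m V m · div d (m) = 0`. What
remains, `Σ d²/g`, is nonnegative.
-/

theorem sum_sum_mul_sub_of_antisymm {ι : Type*} [Fintype ι] {d : ι → ι → ℝ}
    (hd : ∀ m n, d n m = -d m n) (V : ι → ℝ) :
    ∑ m, ∑ n, d m n * (V m - V n) = 2 * ∑ m, V m * ∑ n, d m n := by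
  have hswap : ∑ m, ∑ n, d m n * V n = -∑ m, V m * ∑ n, d m n := by
    rw [Finset.sum_comm, ← Finset.sum_neg_distrib]
    refine Finset.sum_congr rfl fun m _ => ?_
    simp only [hd m, Finset.mul_sum, ← Finset.sum_neg_distrib]
    exact Finset.sum_congr rfl fun n _ => by ring
  calc ∑ m, ∑ n, d m n * (V m - V n) = ∑ m, V m * ∑ n, d m n - ∑ m, ∑ n, d m n * V n := by
        simp only [mul_sub, Finset.sum_sub_distrib, Finset.mul_sum, mul_comm]
    _ = 2 * ∑ m, V m * ∑ n, d m n := by rw [hswap]; ring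

theorem mul_add_sq_div {g : ℝ} (hg : g ≠ 0) (x d : ℝ) :
    (g * x + d) ^ 2 / g = (g * x) ^ 2 / g + 2 * (d * x) + d ^ 2 / g := by
  field_simp
  ring

/-- Thomson's principle: among all antisymmetric flows supported on the conducting edges
and having the same divergence as the Ohmic flow `f*(m,n) = g(m,n)·(V m − V n)`, the
Ohmic flow minimizes the total I²R dissipation `Σ f(m,n)²/g(m,n)`. -/
theorem thomson_principle
    {N : Type*} [Fintype N]
    (g : N → N → ℝ) (hg_symm : ∀ m n, g m n = g n m) (hg_nonneg : ∀ m n, 0 ≤ g m n)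
    (V : N → ℝ)
    (fstar : N → N → ℝ) (hfstar : ∀ m n, fstar m n = g m n * (V m - V n))
    (f : N → N → ℝ)
    (hf_anti : ∀ m n, f m n = -f n m)
    (hf_supp : ∀ m n, g m n = 0 → f m n = 0)
    (hf_div : ∀ m, ∑ n, f m n = ∑ n, fstar m n) :
    ∑ p ∈ Finset.univ.filter (fun p : N × N => 0 < g p.1 p.2), f p.1 p.2 ^ 2 / g p.1 p.2 ≥
      ∑ p ∈ Finset.univ.filter (fun p : N × N => 0 < g p.1 p.2),
        fstar p.1 p.2 ^ 2 / g p.1 p.2 := by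
  set E := Finset.univ.filter (fun p : N × N => 0 < g p.1 p.2)
  set d : N → N → ℝ := fun m n => f m n - fstar m n
  have hd_anti : ∀ m n, d n m = -d m n := fun m n => by
    simp only [d, hfstar, hf_anti m n, hg_symm n m]; ring
  have hd_div : ∀ m, ∑ n, d m n = 0 := fun m => by
    simp only [d, Finset.sum_sub_distrib, hf_div m, sub_self]
  have hd_supp : ∀ p ∉ E, d p.1 p.2 * (V p.1 - V p.2) = 0 := fun p hp => by
    have hg0 : g p.1 p.2 = 0 :=
      le_antisymm (by simpa [E] using hp) (hg_nonneg _ _)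
    simp [d, hfstar, hf_supp _ _ hg0, hg0]
  have hcross : ∑ p ∈ E, d p.1 p.2 * (V p.1 - V p.2) = 0 := by
    rw [Finset.sum_subset (Finset.subset_univ E) fun p _ => hd_supp p, Fintype.sum_prod_type,
      sum_sum_mul_sub_of_antisymm hd_anti]
    simp [hd_div]
  have hexpand : ∀ p ∈ E, f p.1 p.2 ^ 2 / g p.1 p.2 = fstar p.1 p.2 ^ 2 / g p.1 p.2
      + 2 * (d p.1 p.2 * (V p.1 - V p.2)) + d p.1 p.2 ^ 2 / g p.1 p.2 := fun p hp => by
    have hg : g p.1 p.2 ≠ 0 := ((Finset.mem_filter.1 hp).2).ne'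
    rw [hfstar, ← mul_add_sq_div hg]
    simp only [d, hfstar, add_sub_cancel]
  rw [ge_iff_le, Finset.sum_congr rfl hexpand, Finset.sum_add_distrib, Finset.sum_add_distrib,
    ← Finset.mul_sum, hcross, mul_zero, add_zero, le_add_iff_nonneg_right]
  exact Finset.sum_nonneg fun p hp =>
    div_nonneg (sq_nonneg _) (Finset.mem_filter.1 hp).2.le
end

section
/- Consider the four-node DC power-flow network with nodes s, l, r, t, lines s–l of susceptance a > 0, s–r of susceptance b > 0, l–t of susceptance c > 0, r–t of susceptance c, a power injection of 2 at node s and a withdrawal of 2 at node t. Then there exist phase angles θ_s, θ_l, θ_r, θ_t ∈ ℝ such that the line flows f_{sl} = a(θ_s − θ_l), f_{sr} = b(θ_s − θ_r), f_{lt} = c(θ_l − θ_t), f_{rt} = c(θ_r − θ_t) satisfy conservation at every node (f_{sl} + f_{sr} = 2, f_{sl} = f_{lt}, f_{sr} = f_{rt}, f_{lt} + f_{rt} = 2) together with the capacity constraints |f_{lt}| ≤ 1 and |f_{rt}| ≤ 1, if and only if a = b. -/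
theorem eq_one_and_eq_one_of_abs_le_one_of_add_eq_two {R : Type*} [CommRing R] [LinearOrder R]
    [IsStrictOrderedRing R] {x y : R} (hx : |x| ≤ 1) (hy : |y| ≤ 1) (h : x + y = 2) :
    x = 1 ∧ y = 1 := by
  have hx' := le_abs_self x
  have hy' := le_abs_self y
  constructor <;> linarith

theorem gadget_feasible_iff_balanced_general
    (a b c : ℝ) (ha : 0 < a) (hc : 0 < c) :
    (∃ θs θl θr θt : ℝ,
        a * (θs - θl) + b * (θs - θr) = 2 ∧
        a * (θs - θl) = c * (θl - θt) ∧
        b * (θs - θr) = c * (θr - θt) ∧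
        c * (θl - θt) + c * (θr - θt) = 2 ∧
        |c * (θl - θt)| ≤ 1 ∧
        |c * (θr - θt)| ≤ 1) ↔ a = b := by
  constructor
  · rintro ⟨θs, θl, θr, θt, -, hl, hr, ht, hcapl, hcapr⟩
    obtain ⟨hlt, hrt⟩ := eq_one_and_eq_one_of_abs_le_one_of_add_eq_two hcapl hcapr ht
    have hθ : θl = θr := sub_left_inj.mp
      ((eq_inv_of_mul_eq_one_right hlt).trans (eq_inv_of_mul_eq_one_right hrt).symm)
    have hsl : a * (θs - θl) = 1 := hl.trans hlt
    have hsr : b * (θs - θl) = 1 := hθ ▸ hr.trans hrt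
    exact (eq_inv_of_mul_eq_one_left hsl).trans (eq_inv_of_mul_eq_one_left hsr).symm
  · rintro rfl
    have hca : c * c⁻¹ = 1 := mul_inv_cancel₀ hc.ne'
    have haa : a * a⁻¹ = 1 := mul_inv_cancel₀ ha.ne'
    refine ⟨c⁻¹ + a⁻¹, c⁻¹, c⁻¹, 0, ?_, ?_, ?_, ?_, ?_, ?_⟩ <;>
      simp only [add_sub_cancel_left, sub_zero, hca, haa] <;> norm_num

/-- In the four-node reduction gadget (injection 2 at `s`, withdrawal 2 at `t`,
source-side lines of susceptances `a` and `b`, two capacity-1 lines of susceptance `c`),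
a feasible DC power flow exists if and only if the two source-side groups are
balanced, i.e. `a = b`. -/
theorem gadget_feasible_iff_balanced
    (a b c : ℝ) (ha : 0 < a) (hb : 0 < b) (hc : 0 < c) :
    (∃ θs θl θr θt : ℝ,
        a * (θs - θl) + b * (θs - θr) = 2 ∧
        a * (θs - θl) = c * (θl - θt) ∧
        b * (θs - θr) = c * (θr - θt) ∧
        c * (θl - θt) + c * (θr - θt) = 2 ∧
        |c * (θl - θt)| ≤ 1 ∧
        |c * (θr - θt)| ≤ 1) ↔ a = b :=
  gadget_feasible_iff_balanced_general a b c ha hc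
end

section
/- Let x : Fin m → ℝ with x(i) > 0 for all i, let y : Fin n → ℝ with y(j) < 0 for all j, and let c > 0. Then the following are equivalent: (1) there exist a nonempty subset S of Fin m, a nonempty subset T of Fin n, and phase angles θ_s, θ_l, θ_r, θ_t ∈ ℝ such that, setting a = Σ_{i ∈ S} x(i) and b = −Σ_{j ∈ T} y(j), the flows f_{sl} = a(θ_s − θ_l), f_{sr} = b(θ_s − θ_r), f_{lt} = c(θ_l − θ_t), f_{rt} = c(θ_r − θ_t) satisfy f_{sl} + f_{sr} = 2, f_{sl} = f_{lt}, f_{sr} = f_{rt}, |f_{lt}| ≤ 1, and |f_{rt}| ≤ 1; (2) the combined list of numbers x(1), …, x(m), y(1), …, y(n) has a nonempty subset summing to zero. (Correctness of the reduction from subset sum to the topology-control feasibility problem.) -/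
open Finset

/-- Correctness of the reduction from subset sum to the topology-control feasibility
problem: the reduction gadget admits a feasible switching (choice of nonempty
in-service line groups `S`, `T`) with a feasible DC power flow if and only if the
combined list `x(1), …, x(m), y(1), …, y(n)` has a nonempty subset summing to zero. -/
theorem reduction_correctness
    {m n : ℕ} (x : Fin m → ℝ) (hx : ∀ i, 0 < x i)
    (y : Fin n → ℝ) (hy : ∀ j, y j < 0)
    (c : ℝ) (hc : 0 < c) :
    (∃ S : Finset (Fin m), ∃ T : Finset (Fin n), S.Nonempty ∧ T.Nonempty ∧
      ∃ θs θl θr θt : ℝ,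
        (∑ i ∈ S, x i) * (θs - θl) + (-∑ j ∈ T, y j) * (θs - θr) = 2 ∧
        (∑ i ∈ S, x i) * (θs - θl) = c * (θl - θt) ∧
        (-∑ j ∈ T, y j) * (θs - θr) = c * (θr - θt) ∧
        |c * (θl - θt)| ≤ 1 ∧
        |c * (θr - θt)| ≤ 1) ↔
      (∃ A : Finset (Fin m ⊕ Fin n), A.Nonempty ∧ ∑ a ∈ A, Sum.elim x y a = 0) := by
  constructor
  · rintro ⟨S, T, hS, hT, θs, θl, θr, θt, h1, h2, h3, h4, h5⟩
    set a := ∑ i ∈ S, x i with ha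
    set b := -∑ j ∈ T, y j with hb
    have hapos : 0 < a := Finset.sum_pos (fun i _ => hx i) hS
    have hbpos : 0 < b := by
      have : ∑ j ∈ T, y j < 0 := Finset.sum_neg (fun j _ => hy j) hT
      simp only [hb]; linarith
    have h4' : c * (θl - θt) ≤ 1 := (abs_le.mp h4).2
    have h5' : c * (θr - θt) ≤ 1 := (abs_le.mp h5).2
    have hfl : a * (θs - θl) = 1 := by linarith
    have hfr : b * (θs - θr) = 1 := by linarith
    have e1 : c * (θl - θt) = 1 := by linarith
    have e2 : c * (θr - θt) = 1 := by linarith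
    have hlr : θl = θr := by
      have h0 : c * (θl - θr) = 0 := by linear_combination e1 - e2
      rcases mul_eq_zero.mp h0 with h | h
      · exact absurd h hc.ne'
      · linarith
    have hab : a = b := by
      have hfr' : b * (θs - θl) = 1 := by rw [hlr]; exact hfr
      have h0 : (a - b) * (θs - θl) = 0 := by linear_combination hfl - hfr'
      have hne : θs - θl ≠ 0 := by
        intro h; rw [h, mul_zero] at hfl; norm_num at hfl
      rcases mul_eq_zero.mp h0 with h | h
      · linarith
      · exact absurd h hne
    refine ⟨S.disjSum T, ?_, ?_⟩
    · obtain ⟨i, hi⟩ := hS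
      exact ⟨Sum.inl i, by simp [hi]⟩
    · rw [Finset.sum_sumElim]
      have : ∑ j ∈ T, y j = -b := by simp [hb]
      rw [this]; linarith
  · rintro ⟨A, hA, hsum⟩
    have hsum' : ∑ i ∈ A.toLeft, x i + ∑ j ∈ A.toRight, y j = 0 := by
      rw [← Finset.sum_sumElim, Finset.toLeft_disjSum_toRight]; exact hsum
    have hSle : ∑ i ∈ A.toLeft, x i ≥ 0 := Finset.sum_nonneg fun i _ => (hx i).le
    have hTle : ∑ j ∈ A.toRight, y j ≤ 0 := Finset.sum_nonpos fun j _ => (hy j).le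
    have hS : A.toLeft.Nonempty := by
      rcases hA with ⟨z, hz⟩
      cases z with
      | inl i => exact ⟨i, by simpa using hz⟩
      | inr j =>
        by_contra hE
        rw [Finset.not_nonempty_iff_eq_empty] at hE
        have hTne : A.toRight.Nonempty := ⟨j, by simpa using hz⟩
        have : ∑ j ∈ A.toRight, y j < 0 := Finset.sum_neg (fun j _ => hy j) hTne
        rw [hE] at hsum'; simp at hsum'; linarith
    have hT : A.toRight.Nonempty := by
      by_contra hE
      rw [Finset.not_nonempty_iff_eq_empty] at hE
      have : 0 < ∑ i ∈ A.toLeft, x i := Finset.sum_pos (fun i _ => hx i) hS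
      rw [hE] at hsum'; simp at hsum'; linarith
    set a := ∑ i ∈ A.toLeft, x i with ha
    have hapos : 0 < a := Finset.sum_pos (fun i _ => hx i) hS
    have hb : -∑ j ∈ A.toRight, y j = a := by linarith
    refine ⟨A.toLeft, A.toRight, hS, hT, 1/c + 1/a, 1/c, 1/c, 0, ?_, ?_, ?_, ?_, ?_⟩
    · rw [← ha, hb]; field_simp; ring
    · rw [← ha]; field_simp; ring
    · rw [hb]; field_simp; ring
    · simp [abs_of_nonneg, mul_one_div, hc.ne', le_of_eq, div_self]
    · simp [abs_of_nonneg, mul_one_div, hc.ne', le_of_eq, div_self]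
end
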